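/- Let H, k₁, k₂ : [0,∞) → [0,∞) with lim_{t→∞} kᵢ(t) = 0 and lim_{t→∞} H(t) = ∞, and let Q(t; s₁, s₂) be nonincreasing in s₁ and s₂. Suppose there exist functions kᵢ(t, λᵢ) with kᵢ(t, λᵢ) ∼ λᵢ kᵢ(t) as t → ∞ for each fixed λᵢ > 0 (i = 1,2), such that lim_{t→∞} H(t) Q(t; 1 - k₁(t, λ₁), 1 - k₂(t, λ₂)) = h(λ₁, λ₂) for all λ₁, λ₂ > 0, where h has components continuous in both arguments. Then lim_{t→∞} H(t) Q(t; e^{-λ₁k₁(t)}, e^{-λ₂k₂(t)}) = h(λ₁, λ₂) for all λ₁, λ₂ > 0. -/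

import Mathlib

open Filter Set Topology Real

/-!
Write `kᵢ(t, λ) = rᵢ(t, λ) λ kᵢ(t)` with `rᵢ(t, λ) → 1`. Since `kᵢ(t) → 0` and
`1 - y ≤ e^{-y} ≤ 1 / (1 + y)`, for `a < λ < b` eventually
`1 - kᵢ(t, b) ≤ e^{-λ kᵢ(t)} ≤ 1 - kᵢ(t, a)`, all in `[0, 1]`. Monotonicity of `Q` and `H ≥ 0`
squeeze `H(t) Q(t; e^{-λ₁k₁(t)}, e^{-λ₂k₂(t)})` between the expressions at `(sλ₁, sλ₂)` for
`s < 1` and for `s > 1`, whose limits `h(sλ₁, sλ₂)` tend to `h(λ₁, λ₂)` as `s → 1` by continuity.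
-/

section Squeeze

variable {ι ι' α β : Type*} {P : Filter ι} {P' : Filter ι'} {L : Filter α}

theorem tendsto_of_squeeze_of_tendsto_limits [TopologicalSpace β] [LinearOrder β]
    [OrderTopology β] [P.NeBot] [P'.NeBot] {g : α → β} {c : β}
    {lo : ι → α → β} {hi : ι' → α → β} {u : ι → β} {v : ι' → β}
    (hu : Tendsto u P (𝓝 c)) (hv : Tendsto v P' (𝓝 c))
    (hlo : ∀ᶠ i in P, Tendsto (lo i) L (𝓝 (u i)) ∧ lo i ≤ᶠ[L] g)
    (hhi : ∀ᶠ j in P', Tendsto (hi j) L (𝓝 (v j)) ∧ g ≤ᶠ[L] hi j) :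
    Tendsto g L (𝓝 c) := by
  refine tendsto_order.2 ⟨fun a ha => ?_, fun b hb => ?_⟩
  · obtain ⟨i, hai, hlim, hle⟩ := ((hu.eventually_const_lt ha).and hlo).exists
    filter_upwards [hlim.eventually_const_lt hai, hle] with t h₁ h₂ using h₁.trans_le h₂
  · obtain ⟨j, hbj, hlim, hle⟩ := ((hv.eventually_lt_const hb).and hhi).exists
    filter_upwards [hlim.eventually_lt_const hbj, hle] with t h₁ h₂ using h₂.trans_lt h₁

theorem Prod.tendsto_of_squeeze_of_tendsto_limits {β₁ β₂ : Type*} [TopologicalSpace β₁]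
    [LinearOrder β₁] [OrderTopology β₁] [TopologicalSpace β₂] [LinearOrder β₂]
    [OrderTopology β₂] [P.NeBot] [P'.NeBot] {g : α → β₁ × β₂} {c : β₁ × β₂}
    {lo : ι → α → β₁ × β₂} {hi : ι' → α → β₁ × β₂} {u : ι → β₁ × β₂} {v : ι' → β₁ × β₂}
    (hu : Tendsto u P (𝓝 c)) (hv : Tendsto v P' (𝓝 c))
    (hlo : ∀ᶠ i in P, Tendsto (lo i) L (𝓝 (u i)) ∧ lo i ≤ᶠ[L] g)
    (hhi : ∀ᶠ j in P', Tendsto (hi j) L (𝓝 (v j)) ∧ g ≤ᶠ[L] hi j) :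
    Tendsto g L (𝓝 c) :=
  Tendsto.prodMk_nhds
    (_root_.tendsto_of_squeeze_of_tendsto_limits hu.fst_nhds hv.fst_nhds
      (hlo.mono fun _ hi => ⟨hi.1.fst_nhds, hi.2.mono fun _ ht => ht.1⟩)
      (hhi.mono fun _ hj => ⟨hj.1.fst_nhds, hj.2.mono fun _ ht => ht.1⟩))
    (_root_.tendsto_of_squeeze_of_tendsto_limits hu.snd_nhds hv.snd_nhds
      (hlo.mono fun _ hi => ⟨hi.1.snd_nhds, hi.2.mono fun _ ht => ht.2⟩)
      (hhi.mono fun _ hj => ⟨hj.1.snd_nhds, hj.2.mono fun _ ht => ht.2⟩))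

end Squeeze

section Sandwich

variable {α : Type*} {L : Filter α} {k K : α → ℝ}

theorem eventually_eq_div_mul_of_tendsto_div_one {f g : α → ℝ}
    (h : Tendsto (fun t => f t / g t) L (𝓝 1)) : ∀ᶠ t in L, f t = f t / g t * g t :=
  (h.eventually_ne one_ne_zero).mono fun _ ht => (div_mul_cancel₀ _ (div_ne_zero_iff.1 ht).2).symm

theorem exp_neg_mem_Icc_zero_one {x : ℝ} (hx : 0 ≤ x) : exp (-x) ∈ Icc (0 : ℝ) 1 :=
  ⟨(exp_pos _).le, exp_le_one_iff.2 (neg_nonpos.2 hx)⟩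

theorem eventually_one_sub_mem_Icc_zero_exp_neg {l b : ℝ} (hk0 : ∀ᶠ t in L, 0 ≤ k t)
    (hk : Tendsto k L (𝓝 0)) (hlb : l < b) (hK : Tendsto (fun t => K t / (b * k t)) L (𝓝 1)) :
    ∀ᶠ t in L, 1 - K t ∈ Icc 0 (exp (-(l * k t))) := by
  obtain ⟨r, hr, hKr⟩ : ∃ r : α → ℝ, Tendsto r L (𝓝 1) ∧ ∀ᶠ t in L, K t = r t * (b * k t) :=
    ⟨_, hK, eventually_eq_div_mul_of_tendsto_div_one hK⟩
  have hrb : Tendsto (fun t => r t * b) L (𝓝 b) := by simpa using hr.mul_const b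
  have hK0 : Tendsto (fun t => r t * (b * k t)) L (𝓝 0) := by simpa using hr.mul (hk.const_mul b)
  filter_upwards [hKr, hk0, hrb.eventually_const_lt hlb, hK0.eventually_lt_const one_pos]
    with t hKt hkt hl hK1
  rw [← hKt] at hK1
  have hlK : l * k t ≤ K t := by
    rw [hKt, ← mul_assoc]
    exact mul_le_mul_of_nonneg_right hl.le hkt
  exact ⟨by linarith, by linarith [add_one_le_exp (-(l * k t))]⟩

theorem eventually_one_sub_mem_Icc_exp_neg_one {a l : ℝ} (hk0 : ∀ᶠ t in L, 0 ≤ k t)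
    (hk : Tendsto k L (𝓝 0)) (ha : 0 < a) (hal : a < l)
    (hK : Tendsto (fun t => K t / (a * k t)) L (𝓝 1)) :
    ∀ᶠ t in L, 1 - K t ∈ Icc (exp (-(l * k t))) 1 := by
  obtain ⟨r, hr, hKr⟩ : ∃ r : α → ℝ, Tendsto r L (𝓝 1) ∧ ∀ᶠ t in L, K t = r t * (a * k t) :=
    ⟨_, hK, eventually_eq_div_mul_of_tendsto_div_one hK⟩
  have hra : Tendsto (fun t => r t * a) L (𝓝 a) := by simpa using hr.mul_const a
  have hral : Tendsto (fun t => r t * a * (1 + l * k t)) L (𝓝 a) := by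
    simpa using hra.mul ((hk.const_mul l).const_add 1)
  filter_upwards [hKr, hk0, hra.eventually_const_lt ha, hral.eventually_lt_const hal]
    with t hKt hkt hpos hl
  set y := l * k t
  have hy : 0 ≤ y := mul_nonneg (ha.trans hal).le hkt
  have hK0 : 0 ≤ K t := by
    rw [hKt, ← mul_assoc]
    exact mul_nonneg hpos.le hkt
  have hKy : K t * (1 + y) ≤ y := by
    calc K t * (1 + y) = r t * a * (1 + y) * k t := by rw [hKt]; ring
      _ ≤ y := mul_le_mul_of_nonneg_right hl.le hkt
  refine ⟨?_, by linarith⟩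
  rw [exp_neg, inv_le_iff_one_le_mul₀' (exp_pos y)]
  nlinarith [add_one_le_exp y]

end Sandwich

theorem L_change2_general (H k₁ k₂ : ℝ → ℝ) (K₁ K₂ : ℝ → ℝ → ℝ)
    (Q : ℝ → ℝ → ℝ → ℝ × ℝ) (h : ℝ → ℝ → ℝ × ℝ)
    (hHnn : ∀ t, 0 ≤ H t) (hknn : ∀ t, 0 ≤ k₁ t ∧ 0 ≤ k₂ t)
    (hk1 : Tendsto k₁ atTop (nhds 0)) (hk2 : Tendsto k₂ atTop (nhds 0))
    (hK₁ : ∀ l > (0:ℝ), Tendsto (fun t => K₁ t l / (l * k₁ t)) atTop (nhds 1))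
    (hK₂ : ∀ l > (0:ℝ), Tendsto (fun t => K₂ t l / (l * k₂ t)) atTop (nhds 1))
    (hmono : ∀ t, ∀ s₁ s₂ s₁' s₂' : ℝ, s₁ ∈ Set.Icc (0:ℝ) 1 → s₂ ∈ Set.Icc (0:ℝ) 1 →
      s₁' ∈ Set.Icc (0:ℝ) 1 → s₂' ∈ Set.Icc (0:ℝ) 1 →
      s₁ ≤ s₁' → s₂ ≤ s₂' → Q t s₁' s₂' ≤ Q t s₁ s₂)
    (hcont : Continuous fun p : ℝ × ℝ => h p.1 p.2)
    (hlim : ∀ l₁ > (0:ℝ), ∀ l₂ > (0:ℝ),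
      Tendsto (fun t => H t • Q t (1 - K₁ t l₁) (1 - K₂ t l₂)) atTop (nhds (h l₁ l₂))) :
    ∀ l₁ > (0:ℝ), ∀ l₂ > (0:ℝ),
      Tendsto (fun t => H t • Q t (Real.exp (-(l₁ * k₁ t))) (Real.exp (-(l₂ * k₂ t))))
        atTop (nhds (h l₁ l₂)) := by
  intro l₁ hl₁ l₂ hl₂
  have hk₁0 : ∀ᶠ t in atTop, 0 ≤ k₁ t := Eventually.of_forall fun t => (hknn t).1
  have hk₂0 : ∀ᶠ t in atTop, 0 ≤ k₂ t := Eventually.of_forall fun t => (hknn t).2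
  have hexp₁ t : exp (-(l₁ * k₁ t)) ∈ Icc (0 : ℝ) 1 :=
    exp_neg_mem_Icc_zero_one (mul_nonneg hl₁.le (hknn t).1)
  have hexp₂ t : exp (-(l₂ * k₂ t)) ∈ Icc (0 : ℝ) 1 :=
    exp_neg_mem_Icc_zero_one (mul_nonneg hl₂.le (hknn t).2)
  have hh : Tendsto (fun s => h (s * l₁) (s * l₂)) (𝓝 1) (𝓝 (h l₁ l₂)) := by
    have hpath : Continuous fun s : ℝ => (s * l₁, s * l₂) := by fun_prop
    simpa [Function.comp_def] using (hcont.comp hpath).tendsto 1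
  let F s t := H t • Q t (1 - K₁ t (s * l₁)) (1 - K₂ t (s * l₂))
  refine Prod.tendsto_of_squeeze_of_tendsto_limits (lo := F) (hi := F)
    (hh.mono_left (nhdsWithin_le_nhds (s := Iio 1)))
    (hh.mono_left (nhdsWithin_le_nhds (s := Ioi 1))) ?_ ?_
  · filter_upwards [Ioo_mem_nhdsLT zero_lt_one] with s ⟨hs0, hs1⟩
    refine ⟨hlim _ (by positivity) _ (by positivity), ?_⟩
    filter_upwards [eventually_one_sub_mem_Icc_exp_neg_one hk₁0 hk1 (by positivity)
        (mul_lt_of_lt_one_left hl₁ hs1) (hK₁ _ (by positivity)),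
      eventually_one_sub_mem_Icc_exp_neg_one hk₂0 hk2 (by positivity)
        (mul_lt_of_lt_one_left hl₂ hs1) (hK₂ _ (by positivity))] with t h₁ h₂
    exact smul_le_smul_of_nonneg_left (hmono t _ _ _ _ (hexp₁ t) (hexp₂ t)
      (Icc_subset_Icc (exp_pos _).le le_rfl h₁) (Icc_subset_Icc (exp_pos _).le le_rfl h₂)
      h₁.1 h₂.1) (hHnn t)
  · filter_upwards [self_mem_nhdsWithin] with s (hs1 : 1 < s)
    refine ⟨hlim _ (by positivity) _ (by positivity), ?_⟩
    filter_upwards [eventually_one_sub_mem_Icc_zero_exp_neg hk₁0 hk1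
        (lt_mul_of_one_lt_left hl₁ hs1) (hK₁ _ (by positivity)),
      eventually_one_sub_mem_Icc_zero_exp_neg hk₂0 hk2
        (lt_mul_of_one_lt_left hl₂ hs1) (hK₂ _ (by positivity))] with t h₁ h₂
    exact smul_le_smul_of_nonneg_left (hmono t _ _ _ _
      (Icc_subset_Icc le_rfl (hexp₁ t).2 h₁) (Icc_subset_Icc le_rfl (hexp₂ t).2 h₂)
      (hexp₁ t) (hexp₂ t) h₁.2 h₂.2) (hHnn t)

/-- Lemma (L_change2), first part: if `kᵢ(t,λ) ∼ λ kᵢ(t)` for each fixed `λ > 0`, and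
`H(t)Q(t; 1-k₁(t,λ₁), 1-k₂(t,λ₂)) → h(λ₁,λ₂)` for all `λ₁,λ₂ > 0` with `h` continuous,
then `H(t)Q(t; e^{-λ₁k₁(t)}, e^{-λ₂k₂(t)}) → h(λ₁,λ₂)` for all `λ₁,λ₂ > 0`. -/
theorem L_change2 (H k₁ k₂ : ℝ → ℝ) (K₁ K₂ : ℝ → ℝ → ℝ)
    (Q : ℝ → ℝ → ℝ → ℝ × ℝ) (h : ℝ → ℝ → ℝ × ℝ)
    (hHnn : ∀ t, 0 ≤ H t) (hknn : ∀ t, 0 ≤ k₁ t ∧ 0 ≤ k₂ t)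
    (hk1 : Tendsto k₁ atTop (nhds 0)) (hk2 : Tendsto k₂ atTop (nhds 0))
    (hH : Tendsto H atTop atTop)
    (hK₁ : ∀ l > (0:ℝ), Tendsto (fun t => K₁ t l / (l * k₁ t)) atTop (nhds 1))
    (hK₂ : ∀ l > (0:ℝ), Tendsto (fun t => K₂ t l / (l * k₂ t)) atTop (nhds 1))
    (hmono : ∀ t, ∀ s₁ s₂ s₁' s₂' : ℝ, s₁ ∈ Set.Icc (0:ℝ) 1 → s₂ ∈ Set.Icc (0:ℝ) 1 →
      s₁' ∈ Set.Icc (0:ℝ) 1 → s₂' ∈ Set.Icc (0:ℝ) 1 →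
      s₁ ≤ s₁' → s₂ ≤ s₂' → Q t s₁' s₂' ≤ Q t s₁ s₂)
    (hcont : Continuous fun p : ℝ × ℝ => h p.1 p.2)
    (hlim : ∀ l₁ > (0:ℝ), ∀ l₂ > (0:ℝ),
      Tendsto (fun t => H t • Q t (1 - K₁ t l₁) (1 - K₂ t l₂)) atTop (nhds (h l₁ l₂))) :
    ∀ l₁ > (0:ℝ), ∀ l₂ > (0:ℝ),
      Tendsto (fun t => H t • Q t (Real.exp (-(l₁ * k₁ t))) (Real.exp (-(l₂ * k₂ t))))
        atTop (nhds (h l₁ l₂)) :=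
  L_change2_general H k₁ k₂ K₁ K₂ Q h hHnn hknn hk1 hk2 hK₁ hK₂ hmono hcont hlim
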